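/- arXiv:1108.4726 — 2 statements merged into one kernel-verified Lean document; each statement's English description precedes it below -/
import Mathlib

section
/- Let q be a prime power and a, b positive integers. Then S_1(a)·S_1(b) - S_1(a+b), viewed as a polynomial in U = 1/[1] over F_p, has the property that every exponent i of U appearing with nonzero coefficient satisfies (a+b-i) ≡ 0 (mod q-1), and moreover every such exponent i is strictly less than a+b. -/
/-!
Put `x_θ = t + θ`. Since `θ ↦ θ^q` fixes `F`, Frobenius gives `x_θ^q - x_θ = [1]` for every
`θ`, hence `[1] x_θ^n = x_θ^(n+q) - x_θ^(n+1)` for all `n ∈ ℤ`. Summing over `θ`, and using that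
`∑_θ x_θ^m` is `0` for `0 ≤ m < q - 1` and `-1` for `m = q - 1` (expand binomially and use the
power sums of `F`), expresses `S_1(k+1)` through `U`, `S_1(k)` and `S_1(k+1-q)`. So
`S_1(k) = P_k(U)` for integer polynomials `P_k` whose exponents are `≤ k` and `≡ k (mod q-1)`,
with coefficient `(-1)^k` at `U^k`. The product `P_a P_b` has the same shape with weight `a + b`,
and its coefficient at `U^(a+b)` cancels against that of `P_(a+b)`.
-/

open Polynomial Finset

namespace Polynomial

def SupportCongrLE {R : Type*} [Semiring R] (d k : ℕ) (P : R[X]) : Prop :=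
  ∀ i, P.coeff i ≠ 0 → i ≤ k ∧ i ≡ k [MOD d]

namespace SupportCongrLE

variable {R : Type*} {d k l : ℕ}

section Semiring

variable [Semiring R] {P Q : R[X]}

theorem zero : SupportCongrLE d k (0 : R[X]) := fun i h => (h (coeff_zero i)).elim

theorem one : SupportCongrLE d 0 (1 : R[X]) := by
  intro i h
  obtain rfl : i = 0 := by by_contra hi; exact h (coeff_one.trans (if_neg hi))
  exact ⟨le_rfl, rfl⟩

theorem add_modulus (hP : SupportCongrLE d k P) : SupportCongrLE d (k + d) P := fun i h =>
  ⟨(hP i h).1.trans (Nat.le_add_right k d), (hP i h).2.trans Nat.add_modEq_right.symm⟩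

theorem X_mul (hP : SupportCongrLE d k P) : SupportCongrLE d (k + 1) (X * P) := by
  rintro (_ | i) h
  · exact (h (coeff_X_mul_zero P)).elim
  · rw [coeff_X_mul] at h
    exact ⟨Nat.succ_le_succ (hP i h).1, (hP i h).2.add_right 1⟩

theorem mul (hP : SupportCongrLE d k P) (hQ : SupportCongrLE d l Q) :
    SupportCongrLE d (k + l) (P * Q) := by
  intro i h
  rw [coeff_mul] at h
  obtain ⟨⟨m, n⟩, hmn, hprod⟩ := Finset.exists_ne_zero_of_sum_ne_zero h
  rw [Finset.HasAntidiagonal.mem_antidiagonal] at hmn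
  subst hmn
  obtain ⟨hm, hmk⟩ := hP m (left_ne_zero_of_mul hprod)
  obtain ⟨hn, hnl⟩ := hQ n (right_ne_zero_of_mul hprod)
  exact ⟨Nat.add_le_add hm hn, hmk.add hnl⟩

theorem natDegree_le (hP : SupportCongrLE d k P) : P.natDegree ≤ k :=
  natDegree_le_iff_coeff_eq_zero.mpr fun N hN => by_contra fun h => (hP N h).1.not_gt hN

end Semiring

theorem sub [Ring R] {P Q : R[X]} (hP : SupportCongrLE d k P) (hQ : SupportCongrLE d k Q) :
    SupportCongrLE d k (P - Q) := by
  intro i h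
  rw [coeff_sub] at h
  by_cases hPi : P.coeff i = 0
  · exact hQ i fun hQi => h (by rw [hPi, hQi, sub_zero])
  · exact hP i hPi

end SupportCongrLE

end Polynomial

/-- With `d = q - 1`, `S_1(k) = P_k(U)` for `k ≥ 1`. The value `P_0 = 1` is not `S_1(0) = q = 0`:
it is chosen so that the recurrence also yields `P_1 = -X`. -/
noncomputable def powerSumPoly (d : ℕ) : ℕ → ℤ[X]
  | 0 => 1
  | k + 1 => X * ((if d < k then powerSumPoly d (k - d) else 0) - powerSumPoly d k)

theorem supportCongrLE_powerSumPoly (d k : ℕ) : SupportCongrLE d k (powerSumPoly d k) := by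
  induction k using Nat.strong_induction_on with
  | _ k ih =>
    cases k with
    | zero => rw [powerSumPoly]; exact .one
    | succ k =>
      rw [powerSumPoly]
      refine .X_mul (.sub ?_ (ih k k.lt_succ_self))
      split_ifs with hdk
      · simpa [Nat.sub_add_cancel hdk.le] using (ih (k - d) (by omega)).add_modulus
      · exact .zero

theorem coeff_powerSumPoly_self {d : ℕ} (hd : 0 < d) (k : ℕ) :
    (powerSumPoly d k).coeff k = (-1) ^ k := by
  induction k with
  | zero => simp [powerSumPoly]
  | succ k ih =>
    rw [powerSumPoly, coeff_X_mul, coeff_sub, ih, pow_succ]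
    split_ifs with hdk
    · rw [coeff_eq_zero_of_natDegree_lt
        ((supportCongrLE_powerSumPoly d _).natDegree_le.trans_lt (by omega))]
      ring
    · simp

theorem coeff_powerSumPoly_mul_sub_ne_zero {d : ℕ} (hd : 0 < d) {a b i : ℕ}
    (h : (powerSumPoly d a * powerSumPoly d b - powerSumPoly d (a + b)).coeff i ≠ 0) :
    i < a + b ∧ i ≡ a + b [MOD d] := by
  have hP := supportCongrLE_powerSumPoly d
  obtain ⟨hle, hmod⟩ := ((hP a).mul (hP b)).sub (hP (a + b)) i h
  refine ⟨lt_of_le_of_ne hle ?_, hmod⟩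
  rintro rfl
  apply h
  rw [coeff_sub, coeff_mul_add_eq_of_natDegree_le (hP a).natDegree_le (hP b).natDegree_le,
    coeff_powerSumPoly_self hd, coeff_powerSumPoly_self hd, coeff_powerSumPoly_self hd, pow_add,
    sub_self]

namespace FiniteField

variable {K : Type*} [Field K] [Fintype K]

theorem sum_pow_card_sub_one : ∑ x : K, x ^ (Fintype.card K - 1) = -1 := by
  classical
  have hterm (x : K) : x ^ (Fintype.card K - 1) = 1 - if x = 0 then 1 else 0 := by
    split_ifs with hx
    · rw [hx, zero_pow (by have := Fintype.one_lt_card (α := K); omega), sub_self]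
    · rw [pow_card_sub_one_eq_one x hx, sub_zero]
  simp only [hterm, sum_sub_distrib, sum_const, card_univ, nsmul_one, cast_card_eq_zero,
    sum_ite_eq', mem_univ, if_true, zero_sub]

theorem sum_add_algebraMap_pow {A : Type*} [CommRing A] [Algebra K A] (y : A) {m : ℕ}
    (hm : m < Fintype.card K) :
    ∑ θ : K, (y + algebraMap K A θ) ^ m = algebraMap K A (∑ θ : K, θ ^ m) := by
  simp_rw [add_comm y, add_pow, ← map_pow]
  rw [sum_comm, sum_eq_single_of_mem m (self_mem_range_succ m)]
  · simp only [Nat.sub_self, pow_zero, mul_one, Nat.choose_self, Nat.cast_one, map_sum]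
  · intro r hr hrm
    rw [← sum_mul, ← sum_mul, ← map_sum,
      sum_pow_lt_card_sub_one _ r (by rw [mem_range] at hr; omega), map_zero, zero_mul, zero_mul]

theorem add_algebraMap_pow_card {A : Type*} [CommRing A] [Algebra K A] (y : A) (θ : K) :
    (y + algebraMap K A θ) ^ Fintype.card K = y ^ Fintype.card K + algebraMap K A θ := by
  simpa using map_add (frobeniusAlgHom K A) y (algebraMap K A θ)

end FiniteField

section ShiftedPowerSum

variable (K : Type*) {L : Type*} [Field K] [Fintype K] [Field L] [Algebra K L]

/-- `shiftedPowerSum K y (-k)` is `S_1(k)` evaluated at `t = y`. -/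
noncomputable def shiftedPowerSum (y : L) (m : ℤ) : L := ∑ θ : K, (y + algebraMap K L θ) ^ m

variable {K} {y : L}

theorem add_algebraMap_ne_zero (hy : y ^ Fintype.card K ≠ y) (θ : K) :
    y + algebraMap K L θ ≠ 0 := by
  intro h
  apply hy
  rw [eq_neg_of_add_eq_zero_left h, ← map_neg, ← map_pow, FiniteField.pow_card]

theorem shiftedPowerSum_natCast_of_lt {m : ℕ} (hm : m < Fintype.card K - 1) :
    shiftedPowerSum K y m = 0 := by
  simp only [shiftedPowerSum, zpow_natCast]
  rw [FiniteField.sum_add_algebraMap_pow y (by omega), FiniteField.sum_pow_lt_card_sub_one _ m hm,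
    map_zero]

theorem shiftedPowerSum_card_sub_one :
    shiftedPowerSum K y (Fintype.card K - 1 : ℕ) = -1 := by
  simp only [shiftedPowerSum, zpow_natCast]
  rw [FiniteField.sum_add_algebraMap_pow y (Nat.sub_lt Fintype.card_pos one_pos),
    FiniteField.sum_pow_card_sub_one, map_neg, map_one]

theorem mul_shiftedPowerSum (hy : y ^ Fintype.card K ≠ y) (n : ℤ) :
    (y ^ Fintype.card K - y) * shiftedPowerSum K y n =
      shiftedPowerSum K y (n + Fintype.card K) - shiftedPowerSum K y (n + 1) := by
  simp only [shiftedPowerSum, mul_sum, ← sum_sub_distrib]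
  refine sum_congr rfl fun θ _ => ?_
  have hx := add_algebraMap_ne_zero hy θ
  have hfrob : y ^ Fintype.card K - y =
      (y + algebraMap K L θ) ^ Fintype.card K - (y + algebraMap K L θ) := by
    rw [FiniteField.add_algebraMap_pow_card]; ring
  rw [zpow_add₀ hx, zpow_add₀ hx, zpow_natCast, zpow_one, hfrob]
  ring

theorem shiftedPowerSum_neg_eq_eval₂ (hy : y ^ Fintype.card K ≠ y) {k : ℕ} (hk : 1 ≤ k) :
    shiftedPowerSum K y (-k) =
      (powerSumPoly (Fintype.card K - 1) k).eval₂ (Int.castRingHom L)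
        (y ^ Fintype.card K - y)⁻¹ := by
  have hq : 1 < Fintype.card K := Fintype.one_lt_card
  have hg : y ^ Fintype.card K - y ≠ 0 := sub_ne_zero.mpr hy
  induction k using Nat.strong_induction_on with
  | _ k ih =>
  obtain ⟨j, rfl⟩ : ∃ j, k = j + 1 := ⟨k - 1, by omega⟩
  have hrec : shiftedPowerSum K y (-(j + 1 : ℕ)) = (y ^ Fintype.card K - y)⁻¹ *
      (shiftedPowerSum K y ((Fintype.card K - 1 : ℕ) - j) - shiftedPowerSum K y (-j)) := by
    rw [eq_inv_mul_iff_mul_eq₀ hg, mul_shiftedPowerSum hy]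
    congr 2 <;> push_cast [Nat.cast_sub hq.le] <;> ring
  rw [hrec, powerSumPoly, eval₂_mul, eval₂_X, eval₂_sub]
  congr 1
  rcases Nat.eq_zero_or_pos j with rfl | hj
  · rw [Nat.cast_zero, sub_zero, neg_zero, shiftedPowerSum_card_sub_one, ← Nat.cast_zero,
      shiftedPowerSum_natCast_of_lt (by omega)]
    simp [powerSumPoly]
  split_ifs with hdj
  · rw [ih j (by omega) hj,
      show ((Fintype.card K - 1 : ℕ) : ℤ) - j = -((j - (Fintype.card K - 1) : ℕ) : ℤ) by omega,
      ih (j - (Fintype.card K - 1)) (by omega) (by omega)]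
  · rw [ih j (by omega) hj, eval₂_zero,
      show ((Fintype.card K - 1 : ℕ) : ℤ) - j = ((Fintype.card K - 1 - j : ℕ) : ℤ) by omega,
      shiftedPowerSum_natCast_of_lt (by omega)]

end ShiftedPowerSum

theorem RatFunc.X_pow_ne_X {F : Type*} [Field F] {n : ℕ} (hn : n ≠ 1) :
    (RatFunc.X : RatFunc F) ^ n ≠ RatFunc.X := by
  rw [← RatFunc.algebraMap_X, ← map_pow, Ne, (RatFunc.algebraMap_injective F).eq_iff]
  intro h
  simpa [hn] using congrArg natDegree h

theorem RatFunc.sum_inv_X_add_C_pow {F : Type*} [Field F] [Fintype F] (k : ℕ) :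
    ∑ θ : F, ((RatFunc.X + RatFunc.C θ) ^ k)⁻¹ = shiftedPowerSum F RatFunc.X (-k) := by
  simp [shiftedPowerSum, RatFunc.algebraMap_eq_C, zpow_neg]

theorem stmt_6_general (p q : ℕ)
    {F : Type} [Field F] [Fintype F] [CharP F p] (hF : Fintype.card F = q)
    (a b : ℕ) (ha : 1 ≤ a) (hb : 1 ≤ b) :
    ∃ c : ℕ → ZMod p,
      (∀ i, c i ≠ 0 → i < a + b ∧ (q - 1) ∣ (a + b - i)) ∧
      (∑ θ : F, ((RatFunc.X + RatFunc.C θ) ^ a)⁻¹) *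
          (∑ θ : F, ((RatFunc.X + RatFunc.C θ) ^ b)⁻¹) -
          (∑ θ : F, ((RatFunc.X + RatFunc.C θ) ^ (a + b))⁻¹) =
        ∑ i ∈ Finset.range (a + b),
          algebraMap F (RatFunc F) (ZMod.castHom (dvd_refl p) F (c i)) *
            ((RatFunc.X ^ q - RatFunc.X)⁻¹) ^ i := by
  subst hF
  have hq : 1 < Fintype.card F := Fintype.one_lt_card
  set D := powerSumPoly (Fintype.card F - 1) a * powerSumPoly (Fintype.card F - 1) b -
    powerSumPoly (Fintype.card F - 1) (a + b)
  have hD {i : ℕ} (hi : D.coeff i ≠ 0) := coeff_powerSumPoly_mul_sub_ne_zero (by omega) hi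
  have hdeg : D.natDegree < a + b := by
    by_cases h0 : D = 0
    · rw [h0, natDegree_zero]; omega
    · exact (hD (mem_support_iff.mp (natDegree_mem_support_of_nonzero h0))).1
  have hX : (RatFunc.X : RatFunc F) ^ Fintype.card F ≠ RatFunc.X :=
    RatFunc.X_pow_ne_X (by omega)
  refine ⟨fun i => D.coeff i, fun i hi => ?_, ?_⟩
  · obtain ⟨hlt, hmod⟩ := hD (i := i) fun h => hi (by simp only [h, Int.cast_zero])
    exact ⟨hlt, (Nat.modEq_iff_dvd' hlt.le).mp hmod⟩
  · rw [RatFunc.sum_inv_X_add_C_pow, RatFunc.sum_inv_X_add_C_pow, RatFunc.sum_inv_X_add_C_pow,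
      shiftedPowerSum_neg_eq_eval₂ hX ha, shiftedPowerSum_neg_eq_eval₂ hX hb,
      shiftedPowerSum_neg_eq_eval₂ hX (by omega), ← eval₂_mul, ← eval₂_sub,
      eval₂_eq_sum_range' _ hdeg]
    simp

/-- `S_1(a)S_1(b) - S_1(a+b)`, as a polynomial in `U = 1/[1]` with `F_p`
coefficients, has all exponents `i` (with nonzero coefficient) satisfying `i < a+b` and
`(q-1) ∣ (a+b-i)`. -/
theorem stmt_6 (p s q : ℕ) (hp : p.Prime) (hs : 0 < s) (hq : q = p ^ s)
    {F : Type} [Field F] [Fintype F] [CharP F p] (hF : Fintype.card F = q)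
    (a b : ℕ) (ha : 1 ≤ a) (hb : 1 ≤ b) :
    ∃ c : ℕ → ZMod p,
      (∀ i, c i ≠ 0 → i < a + b ∧ (q - 1) ∣ (a + b - i)) ∧
      (∑ θ : F, ((RatFunc.X + RatFunc.C θ) ^ a)⁻¹) *
          (∑ θ : F, ((RatFunc.X + RatFunc.C θ) ^ b)⁻¹) -
          (∑ θ : F, ((RatFunc.X + RatFunc.C θ) ^ (a + b))⁻¹) =
        ∑ i ∈ Finset.range (a + b),
          algebraMap F (RatFunc F) (ZMod.castHom (dvd_refl p) F (c i)) *
            ((RatFunc.X ^ q - RatFunc.X)⁻¹) ^ i :=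
  stmt_6_general p q hF a b ha hb
end

section
/- Let q be a power of 2, r_2 = 2(q-1), and Δ(a,b) = S_1(a)S_1(b) - S_1(a+b). Then for 1 ≤ b ≤ r_2: Δ(2,b) = S_1(2) if b = q-1, and Δ(2,b) = 0 otherwise. -/
/-!
Off the diagonal, `Δ(2, b) = ∑_{θ ≠ η} (X + θ)⁻² (X + η)⁻ᵇ`. Put `η = θ - c` with `c ∈ Fˣ`. In
characteristic 2 the partial fraction rule `y⁻¹ z⁻¹ = c⁻¹ (y⁻¹ + z⁻¹)` (for `z - y = c`) expands
each term in powers of `(X + θ)⁻¹` and `(X + θ - c)⁻¹`, with powers of `c⁻¹` as coefficients.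
Summing over `c` turns a coefficient `c⁻ᵐ` into `1` if `q - 1 ∣ m` and into `0` otherwise, and
summing over `θ` turns the powers of `(X + θ)⁻¹` back into values of `S₁`. For
`1 ≤ b ≤ 2(q - 1)` only a handful of terms survive: `S₁(2)` at `b = q - 1`, and pairs of equal
terms, which cancel in characteristic 2, at `b = 2q - 3` and `b = 2q - 2`.
-/

open Finset

/-- Partial fractions of `z⁻² y⁻ᵇ` in terms of `u = y⁻¹`, `v = z⁻¹`, `w = c⁻¹`, where `z - y = c`
in characteristic 2 (see `CharTwo.inv_mul_inv_eq`). -/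
theorem sq_mul_pow_eq_of_mul_eq {R : Type*} [CommRing R] {u v w : R}
    (huv : u * v = w * (u + v)) (b : ℕ) :
    v ^ 2 * u ^ b = b * w ^ (b + 1) * v + w ^ b * v ^ 2
      + ∑ i ∈ range b, (i + 1) * w ^ (i + 2) * u ^ (b - i) := by
  induction b with
  | zero => simp
  | succ b ih =>
    have hshift : ∀ i ∈ range b, u * ((i + 1) * w ^ (i + 2) * u ^ (b - i))
        = (i + 1) * w ^ (i + 2) * u ^ (b + 1 - i) := by
      intro i hi
      rw [Nat.sub_add_comm (mem_range.mp hi).le, pow_succ]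
      ring
    rw [sum_range_succ, ← sum_congr rfl hshift, ← mul_sum, Nat.add_sub_cancel_left,
      show v ^ 2 * u ^ (b + 1) = u * (v ^ 2 * u ^ b) by ring, ih]
    push_cast
    linear_combination (b * w ^ (b + 1) + w ^ b * v + w ^ (b + 1)) * huv

theorem CharTwo.inv_mul_inv_eq {K : Type*} [Field K] [CharP K 2] {y z c : K}
    (hy : y ≠ 0) (hz : z ≠ 0) (hc : c ≠ 0) (h : z - y = c) :
    y⁻¹ * z⁻¹ = c⁻¹ * (y⁻¹ + z⁻¹) := by
  subst h
  field_simp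
  linear_combination (-y) * CharTwo.two_eq_zero (R := K)

theorem Fintype.sum_eq_add_sum_units_sub {F M : Type*} [Field F] [Fintype F] [DecidableEq F]
    [AddCommMonoid M] (f : F → M) (θ : F) :
    ∑ η, f η = f θ + ∑ c : Fˣ, f (θ - c) := by
  rw [← (Equiv.subLeft θ).sum_comp, Fintype.sum_eq_add_sum_subtype_ne _ 0,
    ← unitsEquivNeZero.sum_comp]
  simp

theorem FiniteField.sum_inv_pow_units {F : Type*} [Field F] [Fintype F] [DecidableEq F] (m : ℕ) :
    ∑ c : Fˣ, (c : F)⁻¹ ^ m = if Fintype.card F - 1 ∣ m then -1 else 0 := by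
  rw [← FiniteField.sum_pow_units, ← Equiv.sum_comp (Equiv.inv Fˣ) fun c ↦ (c : F) ^ m]
  simp

theorem Nat.odd_and_dvd_add_one_iff {q n : ℕ} (hq : Even q) (hn : n + 1 < 4 * (q - 1)) :
    Odd n ∧ q - 1 ∣ n + 1 ↔ n + 1 = 2 * (q - 1) := by
  have hq1 : Odd (q - 1) := Nat.Even.sub_odd (by omega) hq odd_one
  refine ⟨fun ⟨hodd, hdvd⟩ ↦ ?_, fun h ↦ ⟨Nat.odd_iff.mpr (by omega), h ▸ dvd_mul_left _ _⟩⟩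
  exact Nat.eq_of_dvd_of_lt_two_mul n.succ_ne_zero
    ((Nat.coprime_two_left.mpr hq1).mul_dvd_of_dvd_of_dvd hodd.add_one.two_dvd hdvd) (by omega)

theorem CharTwo.natCast_mul_ite_dvd_add_one {R : Type*} [Semiring R] [CharP R 2] {q n : ℕ}
    (hq : Even q) (hn : n + 1 < 4 * (q - 1)) :
    (n : R) * (if q - 1 ∣ n + 1 then 1 else 0) = if n + 1 = 2 * (q - 1) then 1 else 0 := by
  simp only [← Nat.odd_and_dvd_add_one_iff hq hn, CharTwo.natCast_eq_ite, ← Nat.not_odd_iff_even]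
  by_cases hodd : Odd n <;> simp [hodd]

theorem Nat.dvd_iff_eq_or_eq_two_mul {d b : ℕ} (hb0 : 0 < b) (hb : b ≤ 2 * d) :
    d ∣ b ↔ b = d ∨ b = 2 * d := by
  refine ⟨fun ⟨k, hk⟩ ↦ ?_, by rintro (rfl | rfl) <;> simp⟩
  have hk3 : k < 3 := Nat.lt_of_mul_lt_mul_left (by rw [← hk]; omega)
  interval_cases k <;> omega

theorem RatFunc.X_add_C_ne_zero {F : Type*} [Field F] (θ : F) :
    (RatFunc.X + RatFunc.C θ : RatFunc F) ≠ 0 := by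
  rw [← RatFunc.algebraMap_X, ← RatFunc.algebraMap_C, ← map_add]
  exact RatFunc.algebraMap_ne_zero (Polynomial.X_add_C_ne_zero θ)

/-- The paper's `S₁(k)`: the sum of `a⁻ᵏ` over the monic `a ∈ F[t]` of degree 1. -/
noncomputable def powerSumDegOne (F : Type*) [Field F] [Fintype F] (k : ℕ) : RatFunc F :=
  ∑ θ : F, ((RatFunc.X + RatFunc.C θ) ^ k)⁻¹

namespace powerSumDegOne

open RatFunc

variable {F : Type*} [Field F] [Fintype F]

theorem eq_sum_inv_pow (k : ℕ) : powerSumDegOne F k = ∑ θ : F, (X + C θ)⁻¹ ^ k := by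
  simp only [powerSumDegOne, inv_pow]

theorem sum_units_inv_C_pow [DecidableEq F] [CharP F 2] (m : ℕ) :
    ∑ c : Fˣ, (C (c : F))⁻¹ ^ m = if Fintype.card F - 1 ∣ m then 1 else 0 := by
  simp_rw [← map_inv₀, ← map_pow, ← map_sum, FiniteField.sum_inv_pow_units, CharTwo.neg_eq]
  split_ifs <;> simp

theorem mul_sub_add_eq_sum [CharP F 2] (b : ℕ) :
    powerSumDegOne F 2 * powerSumDegOne F b - powerSumDegOne F (2 + b) =
      b * (if Fintype.card F - 1 ∣ b + 1 then 1 else 0) * powerSumDegOne F 1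
      + (if Fintype.card F - 1 ∣ b then 1 else 0) * powerSumDegOne F 2
      + ∑ i ∈ range b, (i + 1) * (if Fintype.card F - 1 ∣ i + 2 then 1 else 0)
          * powerSumDegOne F (b - i) := by
  classical
  set y : F → RatFunc F := fun θ ↦ (X + C θ)⁻¹
  have hexpand : powerSumDegOne F 2 * powerSumDegOne F b - powerSumDegOne F (2 + b) =
      ∑ θ, ∑ c : Fˣ, y θ ^ 2 * y (θ - c) ^ b := by
    simp_rw [eq_sum_inv_pow, sum_mul_sum, ← sum_sub_distrib, pow_add]
    refine sum_congr rfl fun θ _ ↦ ?_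
    rw [Fintype.sum_eq_add_sum_units_sub _ θ, add_sub_cancel_left]
  have hsplit (θ : F) (c : Fˣ) : y θ ^ 2 * y (θ - c) ^ b =
      b * (C (c : F))⁻¹ ^ (b + 1) * y θ + (C (c : F))⁻¹ ^ b * y θ ^ 2
        + ∑ i ∈ range b, (i + 1) * (C (c : F))⁻¹ ^ (i + 2) * y (θ - c) ^ (b - i) :=
    sq_mul_pow_eq_of_mul_eq (CharTwo.inv_mul_inv_eq (X_add_C_ne_zero _) (X_add_C_ne_zero _)
      (by simp) (by rw [map_sub]; ring)) b
  have hshift (k : ℕ) (c : Fˣ) : ∑ θ, y (θ - c) ^ k = powerSumDegOne F k := by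
    rw [eq_sum_inv_pow]
    exact (Equiv.subRight (c : F)).sum_comp fun θ ↦ y θ ^ k
  simp_rw [hexpand, hsplit, sum_add_distrib, ← sum_units_inv_C_pow]
  congr 1
  congr 1
  · rw [sum_comm, ← sum_mul_sum, ← mul_sum, eq_sum_inv_pow 1]
    simp only [pow_one, y]
  · rw [sum_comm, ← sum_mul_sum, eq_sum_inv_pow 2]
  · rw [sum_comm]
    refine (sum_congr rfl fun c _ ↦ sum_comm).trans ?_
    rw [sum_comm]
    refine sum_congr rfl fun i _ ↦ ?_
    rw [mul_sum, sum_mul]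
    refine sum_congr rfl fun c _ ↦ ?_
    rw [← hshift (b - i) c, mul_sum]

theorem mul_sub_add_eq_ite [CharP F 2] {b : ℕ} (hb1 : 1 ≤ b)
    (hb2 : b ≤ 2 * (Fintype.card F - 1)) :
    powerSumDegOne F 2 * powerSumDegOne F b - powerSumDegOne F (2 + b) =
      if b = Fintype.card F - 1 then powerSumDegOne F 2 else 0 := by
  have hq : Even (Fintype.card F) :=
    Nat.even_iff.mpr (FiniteField.even_card_of_char_two (ringChar.eq F 2))
  have hcoeff (n : ℕ) (hn : n < b) :
      (n + 1 : RatFunc F) * (if Fintype.card F - 1 ∣ n + 2 then 1 else 0) =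
        if n = 2 * (Fintype.card F - 1) - 2 then 1 else 0 := by
    rw [← Nat.cast_succ, CharTwo.natCast_mul_ite_dvd_add_one hq (by omega)]
    simp only [show n + 1 + 1 = 2 * (Fintype.card F - 1) ↔ n = 2 * (Fintype.card F - 1) - 2 by
      omega]
  rw [mul_sub_add_eq_sum, sum_congr rfl fun i hi ↦ by rw [hcoeff i (mem_range.mp hi)],
    CharTwo.natCast_mul_ite_dvd_add_one hq (by omega)]
  simp only [Nat.dvd_iff_eq_or_eq_two_mul hb1 hb2, boole_mul, sum_ite_eq', mem_range]
  generalize Fintype.card F - 1 = d at hb2 ⊢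
  rcases (by omega : b + 1 < 2 * d ∨ b + 1 = 2 * d ∨ b = 2 * d) with h | h | h
  · simp only [h.ne, show ¬ 2 * d - 2 < b by omega, if_false, zero_add, add_zero,
      show b = d ∨ b = 2 * d ↔ b = d by omega]
  · simp only [h, show 2 * d - 2 < b by omega, show b - (2 * d - 2) = 1 by omega, if_true,
      show b = d ∨ b = 2 * d ↔ b = d by omega]
    rw [add_right_comm, CharTwo.add_self_eq_zero, zero_add]
  · subst h
    simp only [show ¬ 2 * d + 1 = 2 * d by omega, show 2 * d - 2 < 2 * d by omega,
      show 2 * d - (2 * d - 2) = 2 by omega, show ¬ 2 * d = d by omega, or_true, if_true,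
      if_false, zero_add, CharTwo.add_self_eq_zero]

end powerSumDegOne

/-- For `q` a power of 2 and `1 ≤ b ≤ 2(q-1)`:
`Δ(2,b) = S_1(2)` if `b = q-1`, and `Δ(2,b) = 0` otherwise. -/
theorem stmt_12 (s q : ℕ) (hs : 0 < s) (hq : q = 2 ^ s)
    {F : Type} [Field F] [Fintype F] (hF : Fintype.card F = q)
    (S1 : ℕ → RatFunc F)
    (hS1 : ∀ k, S1 k = ∑ θ : F, ((RatFunc.X + RatFunc.C θ) ^ k)⁻¹)
    (Δ : ℕ → ℕ → RatFunc F)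
    (hΔ : ∀ a b, Δ a b = S1 a * S1 b - S1 (a + b))
    (b : ℕ) (hb1 : 1 ≤ b) (hb2 : b ≤ 2 * (q - 1)) :
    Δ 2 b = if b = q - 1 then S1 2 else 0 := by
  have h2 : (2 : F) = 0 := by
    have hcard := FiniteField.cast_card_eq_zero F
    rw [hF, hq, Nat.cast_pow, Nat.cast_ofNat] at hcard
    exact (pow_eq_zero_iff hs.ne').mp hcard
  have := CharTwo.of_one_ne_zero_of_two_eq_zero one_ne_zero h2
  obtain rfl : S1 = powerSumDegOne F := funext hS1
  subst hF
  rw [hΔ, powerSumDegOne.mul_sub_add_eq_ite hb1 hb2]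
end
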